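/- arXiv:2408.10226 — 3 statements merged into one kernel-verified Lean document; each statement's English description precedes it below -/
import Mathlib

section
/- Let b̂ = (b̂₁, b̂₂, b̂₃) be the reference bubble field with the explicit quartic polynomial components. Then b̂ has vanishing P₂ moments on the face {x = 0} of the reference tetrahedron: for every j ∈ {1, 2, 3} and all nonnegative integers a, b with a + b ≤ 2, the integral of b̂ⱼ(0, y, z) · yᵃ zᵇ over the planar triangle {(y, z) : y ≥ 0, z ≥ 0, y + z ≤ 1} (with respect to two-dimensional Lebesgue measure) equals 0. -/
open MeasureTheory

noncomputable section

/-- First component of the reference bubble field `b̂`. -/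
def bhat1 (x y z : ℝ) : ℝ :=
  263/12*x^4 + 38*x^3*y + 265/3*x^3*z + 29*x^2*y^2 + 96*x^2*y*z + 209/2*x^2*z^2
    - 16*x*y^3 + 42*x*y^2*z + 42*x*y*z^2 + 103/3*x*z^3 + 7/6*y^4 - y^2*z^2 - 335/12*z^4
    - 253/6*x^3 - 87/2*x^2*y - 119*x^2*z + 21/2*x*y^2 - 56*x*y*z - 65*x*z^2 + 112/3*z^3
    + 703/28*x^2 + 7/2*x*y + 251/7*x*z - 41/28*y^2 + 2/7*y*z - 169/14*z^2
    - 181/42*x + 13/21*y + 73/840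

/-- Second component of the reference bubble field `b̂`. -/
def bhat2 (x y z : ℝ) : ℝ :=
  -(233/3)*x^3*y + 67/9*x^3*z - 233/2*x^2*y^2 - 235*x^2*y*z + 163/6*x^2*z^2
    - 203/3*x*y^3 - 225*x*y^2*z - 209*x*y*z^2 + 301/9*x*z^3 - 64/3*y^3*z - 21*y^2*z^2
    - 16/3*y*z^3 + 113/18*x^3 + 1105/8*x^2*y + 155/24*x^2*z + 1025/8*x*y^2 + 1077/4*x*y*z
    - 469/24*x*z^2 + 79/8*y^3 + 417/8*y^2*z + 289/8*y*z^2 - 199/72*z^3 - 625/56*x^2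
    - 505/7*x*y - 94/7*x*z - 447/28*y^2 - 251/7*y*z + 317/56*x + 625/84*y + 101/42*z
    - 383/630

/-- Third component of the reference bubble field `b̂`. -/
def bhat3 (x y z : ℝ) : ℝ :=
  -10*x^3*y - 10*x^3*z + x^2*y^2 + 119*x^2*y*z - 15*x^2*z^2 + 16*x*y^3 + 145*x*y^2*z
    + 129*x*y*z^2 + 16*y^3*z + 11*y^2*z^2 - 29/4*z^4 - 93/8*x^2*y - 61/8*x^2*z
    - 301/8*x*y^2 - 693/4*x*y*z - 141/8*x*z^2 - 13/4*y^3 - 321/8*y^2*z - 193/8*y*z^2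
    + 77/8*z^3 + 181/56*x^2 + 363/14*x*y + 307/14*x*z + 389/56*y^2 + 199/7*y*z
    - 563/168*x - 33/8*y - 263/84*z + 103/210

/-- The reference bubble field `b̂ = (b̂₁, b̂₂, b̂₃)`, indexed by component. -/
def bhat : Fin 3 → ℝ → ℝ → ℝ → ℝ := ![bhat1, bhat2, bhat3]

/-- The planar unit triangle `{(u, v) : u ≥ 0, v ≥ 0, u + v ≤ 1}` in `ℝ²`. -/
def unitTriangle : Set (ℝ × ℝ) := {q | 0 ≤ q.1 ∧ 0 ≤ q.2 ∧ q.1 + q.2 ≤ 1}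



lemma isClosed_unitTriangle : IsClosed unitTriangle := by
  have h1 : IsClosed {q : ℝ × ℝ | 0 ≤ q.1} := isClosed_le continuous_const continuous_fst
  have h2 : IsClosed {q : ℝ × ℝ | 0 ≤ q.2} := isClosed_le continuous_const continuous_snd
  have h3 : IsClosed {q : ℝ × ℝ | q.1 + q.2 ≤ 1} :=
    isClosed_le (continuous_fst.add continuous_snd) continuous_const
  exact h1.inter (h2.inter h3)

lemma isCompact_unitTriangle : IsCompact unitTriangle := by
  refine (isCompact_Icc (a := ((0:ℝ),(0:ℝ))) (b := (1,1))).of_isClosed_subset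
    isClosed_unitTriangle ?_
  rintro q ⟨h1, h2, h3⟩
  simp only [Set.mem_Icc, Prod.le_def]
  exact ⟨⟨h1, h2⟩, by constructor <;> linarith⟩

theorem triangle_integral (f : ℝ × ℝ → ℝ) (hf : Continuous f) :
    ∫ q in unitTriangle, f q = ∫ y in (0:ℝ)..1, ∫ z in (0:ℝ)..(1 - y), f (y, z) := by
  have hmeas := isClosed_unitTriangle.measurableSet
  have hint : IntegrableOn f unitTriangle := hf.continuousOn.integrableOn_compact
    isCompact_unitTriangle
  have hprod : (volume : Measure (ℝ × ℝ)) = (volume : Measure ℝ).prod volume :=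
    Measure.volume_eq_prod ℝ ℝ
  have hI : Integrable (unitTriangle.indicator f) ((volume : Measure ℝ).prod volume) := by
    rw [← hprod]
    exact (integrable_indicator_iff hmeas).2 hint
  rw [← integral_indicator hmeas, hprod, integral_prod _ hI]
  have hfun : ∀ x : ℝ, (∫ z, unitTriangle.indicator f (x, z))
      = (Set.Icc (0:ℝ) 1).indicator (fun x => ∫ z in Set.Icc (0:ℝ) (1 - x), f (x, z)) x := by
    intro x
    by_cases hx : x ∈ Set.Icc (0:ℝ) 1
    · rw [Set.indicator_of_mem hx, ← integral_indicator measurableSet_Icc]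
      congr 1
      funext z
      by_cases hz : z ∈ Set.Icc (0:ℝ) (1 - x)
      · rw [Set.indicator_of_mem hz, Set.indicator_of_mem]
        exact ⟨hx.1, hz.1, by have := hz.2; simp only; linarith⟩
      · rw [Set.indicator_of_notMem hz, Set.indicator_of_notMem]
        intro hmem
        exact hz ⟨hmem.2.1, by have := hmem.2.2; simp only at this ⊢; linarith⟩
    · rw [Set.indicator_of_notMem hx]
      have hz : ∀ z, unitTriangle.indicator f (x, z) = 0 := by
        intro z
        apply Set.indicator_of_notMem
        intro hmem
        exact hx ⟨hmem.1, by have h2 := hmem.2.1; have h3 := hmem.2.2; simp only at h2 h3 ⊢; linarith⟩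
      simp [hz]
  simp_rw [hfun]
  rw [integral_indicator measurableSet_Icc, integral_Icc_eq_integral_Ioc,
    intervalIntegral.integral_of_le zero_le_one]
  apply setIntegral_congr_fun measurableSet_Ioc
  intro x hx
  dsimp only
  rw [integral_Icc_eq_integral_Ioc, ← intervalIntegral.integral_of_le
    (by linarith [hx.2] : (0:ℝ) ≤ 1 - x)]

lemma intz (n : ℕ) (t : ℝ) (c : Fin n → ℝ) :
    ∫ z in (0:ℝ)..t, ∑ i : Fin n, c i * z ^ (i:ℕ)
      = ∑ i : Fin n, c i * (t ^ ((i:ℕ)+1) / ((i:ℕ)+1)) := by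
  rw [intervalIntegral.integral_finset_sum
    (fun i _ => (Continuous.intervalIntegrable (by fun_prop) _ _))]
  refine Finset.sum_congr rfl fun i _ => ?_
  rw [intervalIntegral.integral_const_mul, integral_pow]
  norm_num

lemma int01 (n : ℕ) (c : Fin n → ℝ) :
    ∫ y in (0:ℝ)..1, ∑ i : Fin n, c i * y ^ (i:ℕ) = ∑ i : Fin n, c i / ((i:ℕ)+1) := by
  rw [intz]
  norm_num [div_eq_mul_inv]

lemma case_1_0_0 :
    ∫ q in unitTriangle, bhat1 0 q.1 q.2 * q.1 ^ 0 * q.2 ^ 0 = 0 := by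
  rw [triangle_integral _ (by unfold bhat1; fun_prop)]
  have h1 : ∀ y z : ℝ, bhat1 0 y z * y ^ 0 * z ^ 0
      = ∑ i : Fin 7, ![((73:ℝ)/840) + ((13:ℝ)/21)*y^1 + ((-41:ℝ)/28)*y^2 + ((7:ℝ)/6)*y^4, ((2:ℝ)/7)*y^1, ((-169:ℝ)/14) + (-1:ℝ)*y^2, ((112:ℝ)/3), ((-335:ℝ)/12), (0:ℝ), (0:ℝ)] i * z ^ (i:ℕ) := by
    intro y z
    simp [bhat1, Fin.sum_univ_succ, Matrix.cons_val_zero, Matrix.cons_val_succ]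
    ring
  have h2 : ∀ y : ℝ, (∫ z in (0:ℝ)..(1-y), bhat1 0 y z * y ^ 0 * z ^ 0)
      = ∑ i : Fin 8, ![((-157:ℝ)/840), ((2797:ℝ)/840), ((-409:ℝ)/28), ((2111:ℝ)/84), ((-221:ℝ)/12), ((19:ℝ)/4), (0:ℝ), (0:ℝ)] i * y ^ (i:ℕ) := by
    intro y
    simp only [h1]
    rw [intz]
    simp [Fin.sum_univ_succ, Matrix.cons_val_zero, Matrix.cons_val_succ]
    ring
  simp only [h2]
  rw [int01]
  simp [Fin.sum_univ_succ, Matrix.cons_val_zero, Matrix.cons_val_succ]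
  norm_num

lemma case_1_0_1 :
    ∫ q in unitTriangle, bhat1 0 q.1 q.2 * q.1 ^ 0 * q.2 ^ 1 = 0 := by
  rw [triangle_integral _ (by unfold bhat1; fun_prop)]
  have h1 : ∀ y z : ℝ, bhat1 0 y z * y ^ 0 * z ^ 1
      = ∑ i : Fin 7, ![(0:ℝ), ((73:ℝ)/840) + ((13:ℝ)/21)*y^1 + ((-41:ℝ)/28)*y^2 + ((7:ℝ)/6)*y^4, ((2:ℝ)/7)*y^1, ((-169:ℝ)/14) + (-1:ℝ)*y^2, ((112:ℝ)/3), ((-335:ℝ)/12), (0:ℝ)] i * z ^ (i:ℕ) := by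
    intro y z
    simp [bhat1, Fin.sum_univ_succ, Matrix.cons_val_zero, Matrix.cons_val_succ]
    ring
  have h2 : ∀ y : ℝ, (∫ z in (0:ℝ)..(1-y), bhat1 0 y z * y ^ 0 * z ^ 1)
      = ∑ i : Fin 8, ![((-809:ℝ)/5040), ((2497:ℝ)/840), ((-25327:ℝ)/1680), ((8447:ℝ)/252), ((-6253:ℝ)/168), ((1217:ℝ)/60), ((-311:ℝ)/72), (0:ℝ)] i * y ^ (i:ℕ) := by
    intro y
    simp only [h1]
    rw [intz]
    simp [Fin.sum_univ_succ, Matrix.cons_val_zero, Matrix.cons_val_succ]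
    ring
  simp only [h2]
  rw [int01]
  simp [Fin.sum_univ_succ, Matrix.cons_val_zero, Matrix.cons_val_succ]
  norm_num

lemma case_1_0_2 :
    ∫ q in unitTriangle, bhat1 0 q.1 q.2 * q.1 ^ 0 * q.2 ^ 2 = 0 := by
  rw [triangle_integral _ (by unfold bhat1; fun_prop)]
  have h1 : ∀ y z : ℝ, bhat1 0 y z * y ^ 0 * z ^ 2
      = ∑ i : Fin 7, ![(0:ℝ), (0:ℝ), ((73:ℝ)/840) + ((13:ℝ)/21)*y^1 + ((-41:ℝ)/28)*y^2 + ((7:ℝ)/6)*y^4, ((2:ℝ)/7)*y^1, ((-169:ℝ)/14) + (-1:ℝ)*y^2, ((112:ℝ)/3), ((-335:ℝ)/12)] i * z ^ (i:ℕ) := by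
    intro y z
    simp [bhat1, Fin.sum_univ_succ, Matrix.cons_val_zero, Matrix.cons_val_succ]
    ring
  have h2 : ∀ y : ℝ, (∫ z in (0:ℝ)..(1-y), bhat1 0 y z * y ^ 0 * z ^ 2)
      = ∑ i : Fin 8, ![((-127:ℝ)/840), ((7171:ℝ)/2520), ((-2699:ℝ)/168), ((107767:ℝ)/2520), ((-557:ℝ)/9), ((10547:ℝ)/210), ((-775:ℝ)/36), ((4787:ℝ)/1260)] i * y ^ (i:ℕ) := by
    intro y
    simp only [h1]
    rw [intz]
    simp [Fin.sum_univ_succ, Matrix.cons_val_zero, Matrix.cons_val_succ]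
    ring
  simp only [h2]
  rw [int01]
  simp [Fin.sum_univ_succ, Matrix.cons_val_zero, Matrix.cons_val_succ]
  norm_num

lemma case_1_1_0 :
    ∫ q in unitTriangle, bhat1 0 q.1 q.2 * q.1 ^ 1 * q.2 ^ 0 = 0 := by
  rw [triangle_integral _ (by unfold bhat1; fun_prop)]
  have h1 : ∀ y z : ℝ, bhat1 0 y z * y ^ 1 * z ^ 0
      = ∑ i : Fin 7, ![((73:ℝ)/840)*y^1 + ((13:ℝ)/21)*y^2 + ((-41:ℝ)/28)*y^3 + ((7:ℝ)/6)*y^5, ((2:ℝ)/7)*y^2, ((-169:ℝ)/14)*y^1 + (-1:ℝ)*y^3, ((112:ℝ)/3)*y^1, ((-335:ℝ)/12)*y^1, (0:ℝ), (0:ℝ)] i * z ^ (i:ℕ) := by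
    intro y z
    simp [bhat1, Fin.sum_univ_succ, Matrix.cons_val_zero, Matrix.cons_val_succ]
    ring
  have h2 : ∀ y : ℝ, (∫ z in (0:ℝ)..(1-y), bhat1 0 y z * y ^ 1 * z ^ 0)
      = ∑ i : Fin 8, ![(0:ℝ), ((-157:ℝ)/840), ((2797:ℝ)/840), ((-409:ℝ)/28), ((2111:ℝ)/84), ((-221:ℝ)/12), ((19:ℝ)/4), (0:ℝ)] i * y ^ (i:ℕ) := by
    intro y
    simp only [h1]
    rw [intz]
    simp [Fin.sum_univ_succ, Matrix.cons_val_zero, Matrix.cons_val_succ]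
    ring
  simp only [h2]
  rw [int01]
  simp [Fin.sum_univ_succ, Matrix.cons_val_zero, Matrix.cons_val_succ]
  norm_num

lemma case_1_1_1 :
    ∫ q in unitTriangle, bhat1 0 q.1 q.2 * q.1 ^ 1 * q.2 ^ 1 = 0 := by
  rw [triangle_integral _ (by unfold bhat1; fun_prop)]
  have h1 : ∀ y z : ℝ, bhat1 0 y z * y ^ 1 * z ^ 1
      = ∑ i : Fin 7, ![(0:ℝ), ((73:ℝ)/840)*y^1 + ((13:ℝ)/21)*y^2 + ((-41:ℝ)/28)*y^3 + ((7:ℝ)/6)*y^5, ((2:ℝ)/7)*y^2, ((-169:ℝ)/14)*y^1 + (-1:ℝ)*y^3, ((112:ℝ)/3)*y^1, ((-335:ℝ)/12)*y^1, (0:ℝ)] i * z ^ (i:ℕ) := by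
    intro y z
    simp [bhat1, Fin.sum_univ_succ, Matrix.cons_val_zero, Matrix.cons_val_succ]
    ring
  have h2 : ∀ y : ℝ, (∫ z in (0:ℝ)..(1-y), bhat1 0 y z * y ^ 1 * z ^ 1)
      = ∑ i : Fin 8, ![(0:ℝ), ((-809:ℝ)/5040), ((2497:ℝ)/840), ((-25327:ℝ)/1680), ((8447:ℝ)/252), ((-6253:ℝ)/168), ((1217:ℝ)/60), ((-311:ℝ)/72)] i * y ^ (i:ℕ) := by
    intro y
    simp only [h1]
    rw [intz]
    simp [Fin.sum_univ_succ, Matrix.cons_val_zero, Matrix.cons_val_succ]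
    ring
  simp only [h2]
  rw [int01]
  simp [Fin.sum_univ_succ, Matrix.cons_val_zero, Matrix.cons_val_succ]
  norm_num

lemma case_1_2_0 :
    ∫ q in unitTriangle, bhat1 0 q.1 q.2 * q.1 ^ 2 * q.2 ^ 0 = 0 := by
  rw [triangle_integral _ (by unfold bhat1; fun_prop)]
  have h1 : ∀ y z : ℝ, bhat1 0 y z * y ^ 2 * z ^ 0
      = ∑ i : Fin 7, ![((73:ℝ)/840)*y^2 + ((13:ℝ)/21)*y^3 + ((-41:ℝ)/28)*y^4 + ((7:ℝ)/6)*y^6, ((2:ℝ)/7)*y^3, ((-169:ℝ)/14)*y^2 + (-1:ℝ)*y^4, ((112:ℝ)/3)*y^2, ((-335:ℝ)/12)*y^2, (0:ℝ), (0:ℝ)] i * z ^ (i:ℕ) := by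
    intro y z
    simp [bhat1, Fin.sum_univ_succ, Matrix.cons_val_zero, Matrix.cons_val_succ]
    ring
  have h2 : ∀ y : ℝ, (∫ z in (0:ℝ)..(1-y), bhat1 0 y z * y ^ 2 * z ^ 0)
      = ∑ i : Fin 8, ![(0:ℝ), (0:ℝ), ((-157:ℝ)/840), ((2797:ℝ)/840), ((-409:ℝ)/28), ((2111:ℝ)/84), ((-221:ℝ)/12), ((19:ℝ)/4)] i * y ^ (i:ℕ) := by
    intro y
    simp only [h1]
    rw [intz]
    simp [Fin.sum_univ_succ, Matrix.cons_val_zero, Matrix.cons_val_succ]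
    ring
  simp only [h2]
  rw [int01]
  simp [Fin.sum_univ_succ, Matrix.cons_val_zero, Matrix.cons_val_succ]
  norm_num

lemma case_2_0_0 :
    ∫ q in unitTriangle, bhat2 0 q.1 q.2 * q.1 ^ 0 * q.2 ^ 0 = 0 := by
  rw [triangle_integral _ (by unfold bhat2; fun_prop)]
  have h1 : ∀ y z : ℝ, bhat2 0 y z * y ^ 0 * z ^ 0
      = ∑ i : Fin 7, ![((-383:ℝ)/630) + ((625:ℝ)/84)*y^1 + ((-447:ℝ)/28)*y^2 + ((79:ℝ)/8)*y^3, ((101:ℝ)/42) + ((-251:ℝ)/7)*y^1 + ((417:ℝ)/8)*y^2 + ((-64:ℝ)/3)*y^3, ((289:ℝ)/8)*y^1 + (-21:ℝ)*y^2, ((-199:ℝ)/72) + ((-16:ℝ)/3)*y^1, (0:ℝ), (0:ℝ), (0:ℝ)] i * z ^ (i:ℕ) := by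
    intro y z
    simp [bhat2, Fin.sum_univ_succ, Matrix.cons_val_zero, Matrix.cons_val_succ]
    ring
  have h2 : ∀ y : ℝ, (∫ z in (0:ℝ)..(1-y), bhat2 0 y z * y ^ 0 * z ^ 0)
      = ∑ i : Fin 8, ![((-139:ℝ)/1440), ((374:ℝ)/315), ((-373:ℝ)/168), ((-377:ℝ)/126), ((2627:ℝ)/288), (-5:ℝ), (0:ℝ), (0:ℝ)] i * y ^ (i:ℕ) := by
    intro y
    simp only [h1]
    rw [intz]
    simp [Fin.sum_univ_succ, Matrix.cons_val_zero, Matrix.cons_val_succ]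
    ring
  simp only [h2]
  rw [int01]
  simp [Fin.sum_univ_succ, Matrix.cons_val_zero, Matrix.cons_val_succ]
  norm_num

lemma case_2_0_1 :
    ∫ q in unitTriangle, bhat2 0 q.1 q.2 * q.1 ^ 0 * q.2 ^ 1 = 0 := by
  rw [triangle_integral _ (by unfold bhat2; fun_prop)]
  have h1 : ∀ y z : ℝ, bhat2 0 y z * y ^ 0 * z ^ 1
      = ∑ i : Fin 7, ![(0:ℝ), ((-383:ℝ)/630) + ((625:ℝ)/84)*y^1 + ((-447:ℝ)/28)*y^2 + ((79:ℝ)/8)*y^3, ((101:ℝ)/42) + ((-251:ℝ)/7)*y^1 + ((417:ℝ)/8)*y^2 + ((-64:ℝ)/3)*y^3, ((289:ℝ)/8)*y^1 + (-21:ℝ)*y^2, ((-199:ℝ)/72) + ((-16:ℝ)/3)*y^1, (0:ℝ), (0:ℝ)] i * z ^ (i:ℕ) := by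
    intro y z
    simp [bhat2, Fin.sum_univ_succ, Matrix.cons_val_zero, Matrix.cons_val_succ]
    ring
  have h2 : ∀ y : ℝ, (∫ z in (0:ℝ)..(1-y), bhat2 0 y z * y ^ 0 * z ^ 1)
      = ∑ i : Fin 8, ![((-139:ℝ)/2520), ((7051:ℝ)/10080), ((-4181:ℝ)/2520), ((-617:ℝ)/504), ((3947:ℝ)/504), ((-12269:ℝ)/1440), ((527:ℝ)/180), (0:ℝ)] i * y ^ (i:ℕ) := by
    intro y
    simp only [h1]
    rw [intz]
    simp [Fin.sum_univ_succ, Matrix.cons_val_zero, Matrix.cons_val_succ]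
    ring
  simp only [h2]
  rw [int01]
  simp [Fin.sum_univ_succ, Matrix.cons_val_zero, Matrix.cons_val_succ]
  norm_num

lemma case_2_0_2 :
    ∫ q in unitTriangle, bhat2 0 q.1 q.2 * q.1 ^ 0 * q.2 ^ 2 = 0 := by
  rw [triangle_integral _ (by unfold bhat2; fun_prop)]
  have h1 : ∀ y z : ℝ, bhat2 0 y z * y ^ 0 * z ^ 2
      = ∑ i : Fin 7, ![(0:ℝ), (0:ℝ), ((-383:ℝ)/630) + ((625:ℝ)/84)*y^1 + ((-447:ℝ)/28)*y^2 + ((79:ℝ)/8)*y^3, ((101:ℝ)/42) + ((-251:ℝ)/7)*y^1 + ((417:ℝ)/8)*y^2 + ((-64:ℝ)/3)*y^3, ((289:ℝ)/8)*y^1 + (-21:ℝ)*y^2, ((-199:ℝ)/72) + ((-16:ℝ)/3)*y^1, (0:ℝ)] i * z ^ (i:ℕ) := by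
    intro y z
    simp [bhat2, Fin.sum_univ_succ, Matrix.cons_val_zero, Matrix.cons_val_succ]
    ring
  have h2 : ∀ y : ℝ, (∫ z in (0:ℝ)..(1-y), bhat2 0 y z * y ^ 0 * z ^ 2)
      = ∑ i : Fin 8, ![((-313:ℝ)/5040), ((86:ℝ)/105), ((-3997:ℝ)/1440), ((2249:ℝ)/945), ((77:ℝ)/18), ((-2605:ℝ)/252), ((33353:ℝ)/4320), ((-91:ℝ)/45)] i * y ^ (i:ℕ) := by
    intro y
    simp only [h1]
    rw [intz]
    simp [Fin.sum_univ_succ, Matrix.cons_val_zero, Matrix.cons_val_succ]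
    ring
  simp only [h2]
  rw [int01]
  simp [Fin.sum_univ_succ, Matrix.cons_val_zero, Matrix.cons_val_succ]
  norm_num

lemma case_2_1_0 :
    ∫ q in unitTriangle, bhat2 0 q.1 q.2 * q.1 ^ 1 * q.2 ^ 0 = 0 := by
  rw [triangle_integral _ (by unfold bhat2; fun_prop)]
  have h1 : ∀ y z : ℝ, bhat2 0 y z * y ^ 1 * z ^ 0
      = ∑ i : Fin 7, ![((-383:ℝ)/630)*y^1 + ((625:ℝ)/84)*y^2 + ((-447:ℝ)/28)*y^3 + ((79:ℝ)/8)*y^4, ((101:ℝ)/42)*y^1 + ((-251:ℝ)/7)*y^2 + ((417:ℝ)/8)*y^3 + ((-64:ℝ)/3)*y^4, ((289:ℝ)/8)*y^2 + (-21:ℝ)*y^3, ((-199:ℝ)/72)*y^1 + ((-16:ℝ)/3)*y^2, (0:ℝ), (0:ℝ), (0:ℝ)] i * z ^ (i:ℕ) := by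
    intro y z
    simp [bhat2, Fin.sum_univ_succ, Matrix.cons_val_zero, Matrix.cons_val_succ]
    ring
  have h2 : ∀ y : ℝ, (∫ z in (0:ℝ)..(1-y), bhat2 0 y z * y ^ 1 * z ^ 0)
      = ∑ i : Fin 8, ![(0:ℝ), ((-139:ℝ)/1440), ((374:ℝ)/315), ((-373:ℝ)/168), ((-377:ℝ)/126), ((2627:ℝ)/288), (-5:ℝ), (0:ℝ)] i * y ^ (i:ℕ) := by
    intro y
    simp only [h1]
    rw [intz]
    simp [Fin.sum_univ_succ, Matrix.cons_val_zero, Matrix.cons_val_succ]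
    ring
  simp only [h2]
  rw [int01]
  simp [Fin.sum_univ_succ, Matrix.cons_val_zero, Matrix.cons_val_succ]
  norm_num

lemma case_2_1_1 :
    ∫ q in unitTriangle, bhat2 0 q.1 q.2 * q.1 ^ 1 * q.2 ^ 1 = 0 := by
  rw [triangle_integral _ (by unfold bhat2; fun_prop)]
  have h1 : ∀ y z : ℝ, bhat2 0 y z * y ^ 1 * z ^ 1
      = ∑ i : Fin 7, ![(0:ℝ), ((-383:ℝ)/630)*y^1 + ((625:ℝ)/84)*y^2 + ((-447:ℝ)/28)*y^3 + ((79:ℝ)/8)*y^4, ((101:ℝ)/42)*y^1 + ((-251:ℝ)/7)*y^2 + ((417:ℝ)/8)*y^3 + ((-64:ℝ)/3)*y^4, ((289:ℝ)/8)*y^2 + (-21:ℝ)*y^3, ((-199:ℝ)/72)*y^1 + ((-16:ℝ)/3)*y^2, (0:ℝ), (0:ℝ)] i * z ^ (i:ℕ) := by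
    intro y z
    simp [bhat2, Fin.sum_univ_succ, Matrix.cons_val_zero, Matrix.cons_val_succ]
    ring
  have h2 : ∀ y : ℝ, (∫ z in (0:ℝ)..(1-y), bhat2 0 y z * y ^ 1 * z ^ 1)
      = ∑ i : Fin 8, ![(0:ℝ), ((-139:ℝ)/2520), ((7051:ℝ)/10080), ((-4181:ℝ)/2520), ((-617:ℝ)/504), ((3947:ℝ)/504), ((-12269:ℝ)/1440), ((527:ℝ)/180)] i * y ^ (i:ℕ) := by
    intro y
    simp only [h1]
    rw [intz]
    simp [Fin.sum_univ_succ, Matrix.cons_val_zero, Matrix.cons_val_succ]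
    ring
  simp only [h2]
  rw [int01]
  simp [Fin.sum_univ_succ, Matrix.cons_val_zero, Matrix.cons_val_succ]
  norm_num

lemma case_2_2_0 :
    ∫ q in unitTriangle, bhat2 0 q.1 q.2 * q.1 ^ 2 * q.2 ^ 0 = 0 := by
  rw [triangle_integral _ (by unfold bhat2; fun_prop)]
  have h1 : ∀ y z : ℝ, bhat2 0 y z * y ^ 2 * z ^ 0
      = ∑ i : Fin 7, ![((-383:ℝ)/630)*y^2 + ((625:ℝ)/84)*y^3 + ((-447:ℝ)/28)*y^4 + ((79:ℝ)/8)*y^5, ((101:ℝ)/42)*y^2 + ((-251:ℝ)/7)*y^3 + ((417:ℝ)/8)*y^4 + ((-64:ℝ)/3)*y^5, ((289:ℝ)/8)*y^3 + (-21:ℝ)*y^4, ((-199:ℝ)/72)*y^2 + ((-16:ℝ)/3)*y^3, (0:ℝ), (0:ℝ), (0:ℝ)] i * z ^ (i:ℕ) := by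
    intro y z
    simp [bhat2, Fin.sum_univ_succ, Matrix.cons_val_zero, Matrix.cons_val_succ]
    ring
  have h2 : ∀ y : ℝ, (∫ z in (0:ℝ)..(1-y), bhat2 0 y z * y ^ 2 * z ^ 0)
      = ∑ i : Fin 8, ![(0:ℝ), (0:ℝ), ((-139:ℝ)/1440), ((374:ℝ)/315), ((-373:ℝ)/168), ((-377:ℝ)/126), ((2627:ℝ)/288), (-5:ℝ)] i * y ^ (i:ℕ) := by
    intro y
    simp only [h1]
    rw [intz]
    simp [Fin.sum_univ_succ, Matrix.cons_val_zero, Matrix.cons_val_succ]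
    ring
  simp only [h2]
  rw [int01]
  simp [Fin.sum_univ_succ, Matrix.cons_val_zero, Matrix.cons_val_succ]
  norm_num

lemma case_3_0_0 :
    ∫ q in unitTriangle, bhat3 0 q.1 q.2 * q.1 ^ 0 * q.2 ^ 0 = 0 := by
  rw [triangle_integral _ (by unfold bhat3; fun_prop)]
  have h1 : ∀ y z : ℝ, bhat3 0 y z * y ^ 0 * z ^ 0
      = ∑ i : Fin 7, ![((103:ℝ)/210) + ((-33:ℝ)/8)*y^1 + ((389:ℝ)/56)*y^2 + ((-13:ℝ)/4)*y^3, ((-263:ℝ)/84) + ((199:ℝ)/7)*y^1 + ((-321:ℝ)/8)*y^2 + (16:ℝ)*y^3, ((-193:ℝ)/8)*y^1 + (11:ℝ)*y^2, ((77:ℝ)/8), ((-29:ℝ)/4), (0:ℝ), (0:ℝ)] i * z ^ (i:ℕ) := by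
    intro y z
    simp [bhat3, Fin.sum_univ_succ, Matrix.cons_val_zero, Matrix.cons_val_succ]
    ring
  have h2 : ∀ y : ℝ, (∫ z in (0:ℝ)..(1-y), bhat3 0 y z * y ^ 0 * z ^ 0)
      = ∑ i : Fin 8, ![((-19:ℝ)/160), ((1943:ℝ)/840), ((-1891:ℝ)/168), ((613:ℝ)/28), ((-1787:ℝ)/96), ((347:ℝ)/60), (0:ℝ), (0:ℝ)] i * y ^ (i:ℕ) := by
    intro y
    simp only [h1]
    rw [intz]
    simp [Fin.sum_univ_succ, Matrix.cons_val_zero, Matrix.cons_val_succ]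
    ring
  simp only [h2]
  rw [int01]
  simp [Fin.sum_univ_succ, Matrix.cons_val_zero, Matrix.cons_val_succ]
  norm_num

lemma case_3_0_1 :
    ∫ q in unitTriangle, bhat3 0 q.1 q.2 * q.1 ^ 0 * q.2 ^ 1 = 0 := by
  rw [triangle_integral _ (by unfold bhat3; fun_prop)]
  have h1 : ∀ y z : ℝ, bhat3 0 y z * y ^ 0 * z ^ 1
      = ∑ i : Fin 7, ![(0:ℝ), ((103:ℝ)/210) + ((-33:ℝ)/8)*y^1 + ((389:ℝ)/56)*y^2 + ((-13:ℝ)/4)*y^3, ((-263:ℝ)/84) + ((199:ℝ)/7)*y^1 + ((-321:ℝ)/8)*y^2 + (16:ℝ)*y^3, ((-193:ℝ)/8)*y^1 + (11:ℝ)*y^2, ((77:ℝ)/8), ((-29:ℝ)/4), (0:ℝ)] i * z ^ (i:ℕ) := by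
    intro y z
    simp [bhat3, Fin.sum_univ_succ, Matrix.cons_val_zero, Matrix.cons_val_succ]
    ring
  have h2 : ∀ y : ℝ, (∫ z in (0:ℝ)..(1-y), bhat3 0 y z * y ^ 0 * z ^ 1)
      = ∑ i : Fin 8, ![((-103:ℝ)/1260), ((791:ℝ)/480), ((-5091:ℝ)/560), ((11101:ℝ)/504), ((-8989:ℝ)/336), ((2567:ℝ)/160), ((-91:ℝ)/24), (0:ℝ)] i * y ^ (i:ℕ) := by
    intro y
    simp only [h1]
    rw [intz]
    simp [Fin.sum_univ_succ, Matrix.cons_val_zero, Matrix.cons_val_succ]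
    ring
  simp only [h2]
  rw [int01]
  simp [Fin.sum_univ_succ, Matrix.cons_val_zero, Matrix.cons_val_succ]
  norm_num

lemma case_3_0_2 :
    ∫ q in unitTriangle, bhat3 0 q.1 q.2 * q.1 ^ 0 * q.2 ^ 2 = 0 := by
  rw [triangle_integral _ (by unfold bhat3; fun_prop)]
  have h1 : ∀ y z : ℝ, bhat3 0 y z * y ^ 0 * z ^ 2
      = ∑ i : Fin 7, ![(0:ℝ), (0:ℝ), ((103:ℝ)/210) + ((-33:ℝ)/8)*y^1 + ((389:ℝ)/56)*y^2 + ((-13:ℝ)/4)*y^3, ((-263:ℝ)/84) + ((199:ℝ)/7)*y^1 + ((-321:ℝ)/8)*y^2 + (16:ℝ)*y^3, ((-193:ℝ)/8)*y^1 + (11:ℝ)*y^2, ((77:ℝ)/8), ((-29:ℝ)/4)] i * z ^ (i:ℕ) := by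
    intro y z
    simp [bhat3, Fin.sum_univ_succ, Matrix.cons_val_zero, Matrix.cons_val_succ]
    ring
  have h2 : ∀ y : ℝ, (∫ z in (0:ℝ)..(1-y), bhat3 0 y z * y ^ 0 * z ^ 2)
      = ∑ i : Fin 8, ![((-16:ℝ)/315), ((197:ℝ)/168), ((-5099:ℝ)/672), ((8099:ℝ)/360), ((-12017:ℝ)/336), ((95:ℝ)/3), ((-2363:ℝ)/160), ((397:ℝ)/140)] i * y ^ (i:ℕ) := by
    intro y
    simp only [h1]
    rw [intz]
    simp [Fin.sum_univ_succ, Matrix.cons_val_zero, Matrix.cons_val_succ]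
    ring
  simp only [h2]
  rw [int01]
  simp [Fin.sum_univ_succ, Matrix.cons_val_zero, Matrix.cons_val_succ]
  norm_num

lemma case_3_1_0 :
    ∫ q in unitTriangle, bhat3 0 q.1 q.2 * q.1 ^ 1 * q.2 ^ 0 = 0 := by
  rw [triangle_integral _ (by unfold bhat3; fun_prop)]
  have h1 : ∀ y z : ℝ, bhat3 0 y z * y ^ 1 * z ^ 0
      = ∑ i : Fin 7, ![((103:ℝ)/210)*y^1 + ((-33:ℝ)/8)*y^2 + ((389:ℝ)/56)*y^3 + ((-13:ℝ)/4)*y^4, ((-263:ℝ)/84)*y^1 + ((199:ℝ)/7)*y^2 + ((-321:ℝ)/8)*y^3 + (16:ℝ)*y^4, ((-193:ℝ)/8)*y^2 + (11:ℝ)*y^3, ((77:ℝ)/8)*y^1, ((-29:ℝ)/4)*y^1, (0:ℝ), (0:ℝ)] i * z ^ (i:ℕ) := by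
    intro y z
    simp [bhat3, Fin.sum_univ_succ, Matrix.cons_val_zero, Matrix.cons_val_succ]
    ring
  have h2 : ∀ y : ℝ, (∫ z in (0:ℝ)..(1-y), bhat3 0 y z * y ^ 1 * z ^ 0)
      = ∑ i : Fin 8, ![(0:ℝ), ((-19:ℝ)/160), ((1943:ℝ)/840), ((-1891:ℝ)/168), ((613:ℝ)/28), ((-1787:ℝ)/96), ((347:ℝ)/60), (0:ℝ)] i * y ^ (i:ℕ) := by
    intro y
    simp only [h1]
    rw [intz]
    simp [Fin.sum_univ_succ, Matrix.cons_val_zero, Matrix.cons_val_succ]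
    ring
  simp only [h2]
  rw [int01]
  simp [Fin.sum_univ_succ, Matrix.cons_val_zero, Matrix.cons_val_succ]
  norm_num

lemma case_3_1_1 :
    ∫ q in unitTriangle, bhat3 0 q.1 q.2 * q.1 ^ 1 * q.2 ^ 1 = 0 := by
  rw [triangle_integral _ (by unfold bhat3; fun_prop)]
  have h1 : ∀ y z : ℝ, bhat3 0 y z * y ^ 1 * z ^ 1
      = ∑ i : Fin 7, ![(0:ℝ), ((103:ℝ)/210)*y^1 + ((-33:ℝ)/8)*y^2 + ((389:ℝ)/56)*y^3 + ((-13:ℝ)/4)*y^4, ((-263:ℝ)/84)*y^1 + ((199:ℝ)/7)*y^2 + ((-321:ℝ)/8)*y^3 + (16:ℝ)*y^4, ((-193:ℝ)/8)*y^2 + (11:ℝ)*y^3, ((77:ℝ)/8)*y^1, ((-29:ℝ)/4)*y^1, (0:ℝ)] i * z ^ (i:ℕ) := by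
    intro y z
    simp [bhat3, Fin.sum_univ_succ, Matrix.cons_val_zero, Matrix.cons_val_succ]
    ring
  have h2 : ∀ y : ℝ, (∫ z in (0:ℝ)..(1-y), bhat3 0 y z * y ^ 1 * z ^ 1)
      = ∑ i : Fin 8, ![(0:ℝ), ((-103:ℝ)/1260), ((791:ℝ)/480), ((-5091:ℝ)/560), ((11101:ℝ)/504), ((-8989:ℝ)/336), ((2567:ℝ)/160), ((-91:ℝ)/24)] i * y ^ (i:ℕ) := by
    intro y
    simp only [h1]
    rw [intz]
    simp [Fin.sum_univ_succ, Matrix.cons_val_zero, Matrix.cons_val_succ]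
    ring
  simp only [h2]
  rw [int01]
  simp [Fin.sum_univ_succ, Matrix.cons_val_zero, Matrix.cons_val_succ]
  norm_num

lemma case_3_2_0 :
    ∫ q in unitTriangle, bhat3 0 q.1 q.2 * q.1 ^ 2 * q.2 ^ 0 = 0 := by
  rw [triangle_integral _ (by unfold bhat3; fun_prop)]
  have h1 : ∀ y z : ℝ, bhat3 0 y z * y ^ 2 * z ^ 0
      = ∑ i : Fin 7, ![((103:ℝ)/210)*y^2 + ((-33:ℝ)/8)*y^3 + ((389:ℝ)/56)*y^4 + ((-13:ℝ)/4)*y^5, ((-263:ℝ)/84)*y^2 + ((199:ℝ)/7)*y^3 + ((-321:ℝ)/8)*y^4 + (16:ℝ)*y^5, ((-193:ℝ)/8)*y^3 + (11:ℝ)*y^4, ((77:ℝ)/8)*y^2, ((-29:ℝ)/4)*y^2, (0:ℝ), (0:ℝ)] i * z ^ (i:ℕ) := by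
    intro y z
    simp [bhat3, Fin.sum_univ_succ, Matrix.cons_val_zero, Matrix.cons_val_succ]
    ring
  have h2 : ∀ y : ℝ, (∫ z in (0:ℝ)..(1-y), bhat3 0 y z * y ^ 2 * z ^ 0)
      = ∑ i : Fin 8, ![(0:ℝ), (0:ℝ), ((-19:ℝ)/160), ((1943:ℝ)/840), ((-1891:ℝ)/168), ((613:ℝ)/28), ((-1787:ℝ)/96), ((347:ℝ)/60)] i * y ^ (i:ℕ) := by
    intro y
    simp only [h1]
    rw [intz]
    simp [Fin.sum_univ_succ, Matrix.cons_val_zero, Matrix.cons_val_succ]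
    ring
  simp only [h2]
  rw [int01]
  simp [Fin.sum_univ_succ, Matrix.cons_val_zero, Matrix.cons_val_succ]
  norm_num

/-- The reference bubble field `b̂` has vanishing `P₂` moments on the face `{x = 0}` of
the reference tetrahedron: for every component `j` and all exponents `a, b` with
`a + b ≤ 2`, `∫ b̂ⱼ(0, y, z) yᵃ zᵇ` over the triangle `{y ≥ 0, z ≥ 0, y + z ≤ 1}`
(two-dimensional Lebesgue measure) equals `0`. -/
theorem bhat_moments_face_x_eq_zero :
    ∀ j : Fin 3, ∀ a b : ℕ, a + b ≤ 2 →
      ∫ q in unitTriangle, bhat j 0 q.1 q.2 * q.1 ^ a * q.2 ^ b = 0 := by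
  intro j a b hab
  have ha : a ≤ 2 := le_trans (Nat.le_add_right a b) hab
  have hb : b ≤ 2 := le_trans (Nat.le_add_left b a) hab
  fin_cases j <;> interval_cases a <;> interval_cases b <;>
    first
      | omega
      | exact case_1_0_0
      | exact case_1_0_1
      | exact case_1_0_2
      | exact case_1_1_0
      | exact case_1_1_1
      | exact case_1_2_0
      | exact case_2_0_0
      | exact case_2_0_1
      | exact case_2_0_2
      | exact case_2_1_0
      | exact case_2_1_1
      | exact case_2_2_0
      | exact case_3_0_0
      | exact case_3_0_1
      | exact case_3_0_2
      | exact case_3_1_0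
      | exact case_3_1_1
      | exact case_3_2_0

end
end

section
/- Let b̂ = (b̂₁, b̂₂, b̂₃) be the reference bubble field with the explicit quartic polynomial components. Then b̂ has vanishing P₂ moments on the slanted face {x + y + z = 1} of the reference tetrahedron: for every j ∈ {1, 2, 3} and all nonnegative integers a, b with a + b ≤ 2, the integral of b̂ⱼ(x, y, 1 − x − y) · xᵃ yᵇ over the planar triangle {(x, y) : x ≥ 0, y ≥ 0, x + y ≤ 1} (with respect to two-dimensional Lebesgue measure) equals 0. (Since the surface measure on the slanted face equals √3 times the Lebesgue measure of this parameter triangle, this is equivalent to orthogonality of b̂ⱼ to all polynomials of degree at most 2 on the slanted face with respect to its surface measure.) -/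
open MeasureTheory

noncomputable section

namespace BAux

lemma hclosed : IsClosed unitTriangle := by
  have h : unitTriangle = {q : ℝ × ℝ | 0 ≤ q.1} ∩ ({q | 0 ≤ q.2} ∩ {q | q.1 + q.2 ≤ 1}) := rfl
  rw [h]
  exact (isClosed_le continuous_const continuous_fst).inter
    ((isClosed_le continuous_const continuous_snd).inter
      (isClosed_le (continuous_fst.add continuous_snd) continuous_const))

lemma hcompact : IsCompact unitTriangle := by
  apply (isCompact_Icc (a := ((0 : ℝ), (0 : ℝ))) (b := (1, 1))).of_isClosed_subset hclosed
  rintro ⟨x, y⟩ ⟨hx, hy, hxy⟩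
  simp only [Set.mem_Icc, Prod.mk_le_mk] at *
  exact ⟨⟨hx, hy⟩, by linarith, by linarith⟩

lemma integrableOn_mono (m n : ℕ) :
    IntegrableOn (fun q : ℝ × ℝ => q.1 ^ m * q.2 ^ n) unitTriangle :=
  (((continuous_fst.pow m).mul (continuous_snd.pow n)).continuousOn).integrableOn_compact hcompact

lemma betaInt : ∀ n m : ℕ, ∫ x in (0:ℝ)..1, x ^ m * (1 - x) ^ n
    = (m.factorial * n.factorial : ℝ) / (m + n + 1).factorial := by
  intro n
  induction n with
  | zero =>
    intro m
    simp only [pow_zero, mul_one, integral_pow, Nat.factorial_zero, Nat.cast_one, one_pow,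
      Nat.add_zero]
    rw [Nat.factorial_succ]
    have hm : (m.factorial : ℝ) ≠ 0 := Nat.cast_ne_zero.mpr m.factorial_ne_zero
    push_cast
    rw [zero_pow (Nat.succ_ne_zero m)]
    field_simp
    norm_num
  | succ n ih =>
    intro m
    have hu : ∀ x ∈ Set.uIcc (0:ℝ) 1, HasDerivAt (fun x : ℝ => (1 - x) ^ (n + 1))
        (-((n : ℝ) + 1) * (1 - x) ^ n) x := by
      intro x _
      have h1 : HasDerivAt (fun x : ℝ => 1 - x) (-1) x := by
        simpa using (hasDerivAt_id x).const_sub 1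
      have h2 := h1.pow (n + 1)
      refine h2.congr_deriv ?_
      rw [Nat.add_sub_cancel]
      push_cast
      ring
    have hv : ∀ x ∈ Set.uIcc (0:ℝ) 1, HasDerivAt (fun x : ℝ => x ^ (m + 1) / ((m : ℝ) + 1))
        (x ^ m) x := by
      intro x _
      have h2 := (hasDerivAt_pow (m + 1) x).div_const ((m : ℝ) + 1)
      refine h2.congr_deriv ?_
      have : ((m : ℝ) + 1) ≠ 0 := by positivity
      rw [Nat.add_sub_cancel]
      push_cast
      field_simp
    have hu' : IntervalIntegrable (fun x : ℝ => -((n : ℝ) + 1) * (1 - x) ^ n) volume 0 1 :=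
      (Continuous.mul continuous_const ((continuous_const.sub continuous_id).pow n)).intervalIntegrable 0 1
    have hv' : IntervalIntegrable (fun x : ℝ => x ^ m) volume 0 1 :=
      (continuous_pow m).intervalIntegrable 0 1
    have h := intervalIntegral.integral_mul_deriv_eq_deriv_mul hu hv hu' hv'
    have hcomm : ∫ x in (0:ℝ)..1, x ^ m * (1 - x) ^ (n + 1)
        = ∫ x in (0:ℝ)..1, (1 - x) ^ (n + 1) * x ^ m := by
      congr 1
      funext x
      ring
    have hrw : (fun x : ℝ => -((n : ℝ) + 1) * (1 - x) ^ n * (x ^ (m + 1) / ((m : ℝ) + 1)))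
        = fun x : ℝ => (-((n : ℝ) + 1) / ((m : ℝ) + 1)) * (x ^ (m + 1) * (1 - x) ^ n) := by
      funext x
      ring
    rw [hcomm, h, hrw, intervalIntegral.integral_const_mul, ih (m + 1)]
    have e1 : (m + 1) + n + 1 = m + (n + 1) + 1 := by omega
    rw [e1]
    have hfm : ((m + 1).factorial : ℝ) = ((m : ℝ) + 1) * m.factorial := by
      rw [Nat.factorial_succ]; push_cast; ring
    have hfn : ((n + 1).factorial : ℝ) = ((n : ℝ) + 1) * n.factorial := by
      rw [Nat.factorial_succ]; push_cast; ring
    have hm1 : ((m : ℝ) + 1) ≠ 0 := by positivity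
    have hd : ((m + (n + 1) + 1).factorial : ℝ) ≠ 0 :=
      Nat.cast_ne_zero.mpr (Nat.factorial_ne_zero _)
    rw [hfm, hfn]
    field_simp
    ring


lemma Iv_eq (m n : ℕ) : ∫ q in unitTriangle, q.1 ^ m * q.2 ^ n
    = (m.factorial * n.factorial : ℝ) / (m + n + 2).factorial := by
  have hmeas : MeasurableSet unitTriangle := hclosed.measurableSet
  have hint : Integrable (unitTriangle.indicator fun q : ℝ × ℝ => q.1 ^ m * q.2 ^ n)
      (volume.prod volume) := by
    rw [← MeasureTheory.Measure.volume_eq_prod]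
    exact (integrableOn_mono m n).integrable_indicator hmeas
  rw [← MeasureTheory.integral_indicator hmeas, MeasureTheory.Measure.volume_eq_prod,
    MeasureTheory.integral_prod _ hint]
  have inner : ∀ x : ℝ,
      (∫ y : ℝ, unitTriangle.indicator (fun q : ℝ × ℝ => q.1 ^ m * q.2 ^ n) (x, y))
        = Set.indicator (Set.Icc (0:ℝ) 1)
            (fun x => x ^ m * ((1 - x) ^ (n + 1) / ((n : ℝ) + 1))) x := by
    intro x
    by_cases hx : x ∈ Set.Icc (0:ℝ) 1
    · rw [Set.indicator_of_mem hx]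
      have hfun : (fun y : ℝ => unitTriangle.indicator
            (fun q : ℝ × ℝ => q.1 ^ m * q.2 ^ n) (x, y))
          = Set.indicator (Set.Icc 0 (1 - x)) (fun y : ℝ => x ^ m * y ^ n) := by
        funext y
        by_cases hy : y ∈ Set.Icc (0:ℝ) (1 - x)
        · rw [Set.indicator_of_mem hy]
          have hmem : ((x, y) : ℝ × ℝ) ∈ unitTriangle :=
            ⟨hx.1, hy.1, by have := hy.2; simp only; linarith⟩
          rw [Set.indicator_of_mem hmem]
        · have hnmem : ((x, y) : ℝ × ℝ) ∉ unitTriangle := by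
            intro hm
            exact hy ⟨hm.2.1, by have := hm.2.2; simp only at this ⊢; linarith⟩
          rw [Set.indicator_of_notMem hnmem, Set.indicator_of_notMem hy]
      rw [hfun, MeasureTheory.integral_indicator measurableSet_Icc,
        MeasureTheory.integral_Icc_eq_integral_Ioc,
        ← intervalIntegral.integral_of_le (by linarith [hx.2] : (0:ℝ) ≤ 1 - x),
        intervalIntegral.integral_const_mul, integral_pow]
      rw [zero_pow (Nat.succ_ne_zero n)]
      ring
    · rw [Set.indicator_of_notMem hx]
      have hz : ∀ y : ℝ, unitTriangle.indicator
          (fun q : ℝ × ℝ => q.1 ^ m * q.2 ^ n) (x, y) = 0 := by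
        intro y
        apply Set.indicator_of_notMem
        intro hm
        rcases hm with ⟨h1, h2, h3⟩
        simp only at h1 h2 h3
        simp only [Set.mem_Icc, not_and_or, not_le] at hx
        rcases hx with hx | hx
        · linarith
        · linarith
      simp only [hz, MeasureTheory.integral_zero]
  simp only [inner]
  rw [MeasureTheory.integral_indicator measurableSet_Icc,
    MeasureTheory.integral_Icc_eq_integral_Ioc,
    ← intervalIntegral.integral_of_le (zero_le_one (α := ℝ))]
  have hrw : (fun x : ℝ => x ^ m * ((1 - x) ^ (n + 1) / ((n : ℝ) + 1)))
      = fun x : ℝ => (1 / ((n : ℝ) + 1)) * (x ^ m * (1 - x) ^ (n + 1)) := by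
    funext x; ring
  rw [hrw, intervalIntegral.integral_const_mul, betaInt (n + 1) m]
  have e1 : m + (n + 1) + 1 = m + n + 2 := by omega
  rw [e1]
  have hfn : ((n + 1).factorial : ℝ) = ((n : ℝ) + 1) * n.factorial := by
    rw [Nat.factorial_succ]; push_cast; ring
  have hn1 : ((n : ℝ) + 1) ≠ 0 := by positivity
  have hd : ((m + n + 2).factorial : ℝ) ≠ 0 := Nat.cast_ne_zero.mpr (Nat.factorial_ne_zero _)
  rw [hfn]
  field_simp


def term (x y : ℝ) (p : ℝ × ℕ × ℕ) : ℝ := p.1 * (x ^ p.2.1 * y ^ p.2.2)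

def tval (p : ℝ × ℕ × ℕ) : ℝ :=
  p.1 * ((p.2.1.factorial * p.2.2.factorial : ℝ) / (p.2.1 + p.2.2 + 2).factorial)

lemma integrableOn_term_sum (L : List (ℝ × ℕ × ℕ)) :
    IntegrableOn (fun q : ℝ × ℝ => (L.map (term q.1 q.2)).sum) unitTriangle := by
  induction L with
  | nil =>
    simp only [List.map_nil, List.sum_nil]
    exact integrableOn_zero
  | cons p L ih =>
    simp only [List.map_cons, List.sum_cons]
    exact ((integrableOn_mono p.2.1 p.2.2).const_mul p.1).add ih

lemma int_term_sum (L : List (ℝ × ℕ × ℕ)) :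
    ∫ q in unitTriangle, (L.map (term q.1 q.2)).sum = (L.map tval).sum := by
  induction L with
  | nil => simp
  | cons p L ih =>
    simp only [List.map_cons, List.sum_cons, term]
    rw [MeasureTheory.integral_add ((integrableOn_mono p.2.1 p.2.2).const_mul p.1)
      (by simpa only [term, IntegrableOn] using integrableOn_term_sum L)]
    rw [MeasureTheory.integral_const_mul, Iv_eq]
    rw [ih]
    rfl

lemma vanish (f : ℝ → ℝ → ℝ) (L : List (ℝ × ℕ × ℕ))
    (h : ∀ x y : ℝ, f x y = (L.map (term x y)).sum)
    (hz : (L.map tval).sum = 0) :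
    ∫ q in unitTriangle, f q.1 q.2 = 0 := by
  simp only [h]
  rw [int_term_sum]
  exact hz

end BAux

lemma momcase1_0_0 :
    ∫ q in unitTriangle, bhat1 q.1 q.2 (1 - q.1 - q.2) * q.1 ^ 0 * q.2 ^ 0 = 0 :=
  BAux.vanish (fun x y => bhat1 x y (1 - x - y) * x ^ 0 * y ^ 0)
    [((-719/280 : ℝ), 0, 0), ((173/7 : ℝ), 0, 1), ((-1969/28 : ℝ), 0, 2), ((229/3 : ℝ), 0, 3), ((-111/4 : ℝ), 0, 4), ((1037/42 : ℝ), 1, 0), ((-2167/14 : ℝ), 1, 1), ((575/2 : ℝ), 1, 2), ((-164 : ℝ), 1, 3), ((-1843/28 : ℝ), 2, 0), ((467/2 : ℝ), 2, 1), ((-192 : ℝ), 2, 2), ((137/2 : ℝ), 3, 0), ((-110 : ℝ), 3, 1), ((-145/6 : ℝ), 4, 0)]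
    (by intro x y
        simp only [bhat1, BAux.term, List.map_cons, List.map_nil, List.sum_cons, List.sum_nil]
        ring)
    (by norm_num [BAux.tval, Nat.factorial])

lemma momcase1_0_1 :
    ∫ q in unitTriangle, bhat1 q.1 q.2 (1 - q.1 - q.2) * q.1 ^ 0 * q.2 ^ 1 = 0 :=
  BAux.vanish (fun x y => bhat1 x y (1 - x - y) * x ^ 0 * y ^ 1)
    [((-719/280 : ℝ), 0, 1), ((173/7 : ℝ), 0, 2), ((-1969/28 : ℝ), 0, 3), ((229/3 : ℝ), 0, 4), ((-111/4 : ℝ), 0, 5), ((1037/42 : ℝ), 1, 1), ((-2167/14 : ℝ), 1, 2), ((575/2 : ℝ), 1, 3), ((-164 : ℝ), 1, 4), ((-1843/28 : ℝ), 2, 1), ((467/2 : ℝ), 2, 2), ((-192 : ℝ), 2, 3), ((137/2 : ℝ), 3, 1), ((-110 : ℝ), 3, 2), ((-145/6 : ℝ), 4, 1)]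
    (by intro x y
        simp only [bhat1, BAux.term, List.map_cons, List.map_nil, List.sum_cons, List.sum_nil]
        ring)
    (by norm_num [BAux.tval, Nat.factorial])

lemma momcase1_0_2 :
    ∫ q in unitTriangle, bhat1 q.1 q.2 (1 - q.1 - q.2) * q.1 ^ 0 * q.2 ^ 2 = 0 :=
  BAux.vanish (fun x y => bhat1 x y (1 - x - y) * x ^ 0 * y ^ 2)
    [((-719/280 : ℝ), 0, 2), ((173/7 : ℝ), 0, 3), ((-1969/28 : ℝ), 0, 4), ((229/3 : ℝ), 0, 5), ((-111/4 : ℝ), 0, 6), ((1037/42 : ℝ), 1, 2), ((-2167/14 : ℝ), 1, 3), ((575/2 : ℝ), 1, 4), ((-164 : ℝ), 1, 5), ((-1843/28 : ℝ), 2, 2), ((467/2 : ℝ), 2, 3), ((-192 : ℝ), 2, 4), ((137/2 : ℝ), 3, 2), ((-110 : ℝ), 3, 3), ((-145/6 : ℝ), 4, 2)]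
    (by intro x y
        simp only [bhat1, BAux.term, List.map_cons, List.map_nil, List.sum_cons, List.sum_nil]
        ring)
    (by norm_num [BAux.tval, Nat.factorial])

lemma momcase1_1_0 :
    ∫ q in unitTriangle, bhat1 q.1 q.2 (1 - q.1 - q.2) * q.1 ^ 1 * q.2 ^ 0 = 0 :=
  BAux.vanish (fun x y => bhat1 x y (1 - x - y) * x ^ 1 * y ^ 0)
    [((-719/280 : ℝ), 1, 0), ((173/7 : ℝ), 1, 1), ((-1969/28 : ℝ), 1, 2), ((229/3 : ℝ), 1, 3), ((-111/4 : ℝ), 1, 4), ((1037/42 : ℝ), 2, 0), ((-2167/14 : ℝ), 2, 1), ((575/2 : ℝ), 2, 2), ((-164 : ℝ), 2, 3), ((-1843/28 : ℝ), 3, 0), ((467/2 : ℝ), 3, 1), ((-192 : ℝ), 3, 2), ((137/2 : ℝ), 4, 0), ((-110 : ℝ), 4, 1), ((-145/6 : ℝ), 5, 0)]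
    (by intro x y
        simp only [bhat1, BAux.term, List.map_cons, List.map_nil, List.sum_cons, List.sum_nil]
        ring)
    (by norm_num [BAux.tval, Nat.factorial])

lemma momcase1_1_1 :
    ∫ q in unitTriangle, bhat1 q.1 q.2 (1 - q.1 - q.2) * q.1 ^ 1 * q.2 ^ 1 = 0 :=
  BAux.vanish (fun x y => bhat1 x y (1 - x - y) * x ^ 1 * y ^ 1)
    [((-719/280 : ℝ), 1, 1), ((173/7 : ℝ), 1, 2), ((-1969/28 : ℝ), 1, 3), ((229/3 : ℝ), 1, 4), ((-111/4 : ℝ), 1, 5), ((1037/42 : ℝ), 2, 1), ((-2167/14 : ℝ), 2, 2), ((575/2 : ℝ), 2, 3), ((-164 : ℝ), 2, 4), ((-1843/28 : ℝ), 3, 1), ((467/2 : ℝ), 3, 2), ((-192 : ℝ), 3, 3), ((137/2 : ℝ), 4, 1), ((-110 : ℝ), 4, 2), ((-145/6 : ℝ), 5, 1)]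
    (by intro x y
        simp only [bhat1, BAux.term, List.map_cons, List.map_nil, List.sum_cons, List.sum_nil]
        ring)
    (by norm_num [BAux.tval, Nat.factorial])

lemma momcase1_2_0 :
    ∫ q in unitTriangle, bhat1 q.1 q.2 (1 - q.1 - q.2) * q.1 ^ 2 * q.2 ^ 0 = 0 :=
  BAux.vanish (fun x y => bhat1 x y (1 - x - y) * x ^ 2 * y ^ 0)
    [((-719/280 : ℝ), 2, 0), ((173/7 : ℝ), 2, 1), ((-1969/28 : ℝ), 2, 2), ((229/3 : ℝ), 2, 3), ((-111/4 : ℝ), 2, 4), ((1037/42 : ℝ), 3, 0), ((-2167/14 : ℝ), 3, 1), ((575/2 : ℝ), 3, 2), ((-164 : ℝ), 3, 3), ((-1843/28 : ℝ), 4, 0), ((467/2 : ℝ), 4, 1), ((-192 : ℝ), 4, 2), ((137/2 : ℝ), 5, 0), ((-110 : ℝ), 5, 1), ((-145/6 : ℝ), 6, 0)]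
    (by intro x y
        simp only [bhat1, BAux.term, List.map_cons, List.map_nil, List.sum_cons, List.sum_nil]
        ring)
    (by norm_num [BAux.tval, Nat.factorial])

lemma momcase2_0_0 :
    ∫ q in unitTriangle, bhat2 q.1 q.2 (1 - q.1 - q.2) * q.1 ^ 0 * q.2 ^ 0 = 0 :=
  BAux.vanish (fun x y => bhat2 x y (1 - x - y) * x ^ 0 * y ^ 0)
    [((-2437/2520 : ℝ), 0, 0), ((347/42 : ℝ), 0, 1), ((-284/21 : ℝ), 0, 2), ((47/36 : ℝ), 0, 3), ((17/3 : ℝ), 0, 4), ((6059/504 : ℝ), 1, 0), ((-4061/42 : ℝ), 1, 1), ((2053/12 : ℝ), 1, 2), ((-808/9 : ℝ), 1, 3), ((-5653/168 : ℝ), 2, 0), ((2173/12 : ℝ), 2, 1), ((-458/3 : ℝ), 2, 2), ((2627/72 : ℝ), 3, 0), ((-898/9 : ℝ), 3, 1), ((-247/18 : ℝ), 4, 0)]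
    (by intro x y
        simp only [bhat2, BAux.term, List.map_cons, List.map_nil, List.sum_cons, List.sum_nil]
        ring)
    (by norm_num [BAux.tval, Nat.factorial])

lemma momcase2_0_1 :
    ∫ q in unitTriangle, bhat2 q.1 q.2 (1 - q.1 - q.2) * q.1 ^ 0 * q.2 ^ 1 = 0 :=
  BAux.vanish (fun x y => bhat2 x y (1 - x - y) * x ^ 0 * y ^ 1)
    [((-2437/2520 : ℝ), 0, 1), ((347/42 : ℝ), 0, 2), ((-284/21 : ℝ), 0, 3), ((47/36 : ℝ), 0, 4), ((17/3 : ℝ), 0, 5), ((6059/504 : ℝ), 1, 1), ((-4061/42 : ℝ), 1, 2), ((2053/12 : ℝ), 1, 3), ((-808/9 : ℝ), 1, 4), ((-5653/168 : ℝ), 2, 1), ((2173/12 : ℝ), 2, 2), ((-458/3 : ℝ), 2, 3), ((2627/72 : ℝ), 3, 1), ((-898/9 : ℝ), 3, 2), ((-247/18 : ℝ), 4, 1)]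
    (by intro x y
        simp only [bhat2, BAux.term, List.map_cons, List.map_nil, List.sum_cons, List.sum_nil]
        ring)
    (by norm_num [BAux.tval, Nat.factorial])

lemma momcase2_0_2 :
    ∫ q in unitTriangle, bhat2 q.1 q.2 (1 - q.1 - q.2) * q.1 ^ 0 * q.2 ^ 2 = 0 :=
  BAux.vanish (fun x y => bhat2 x y (1 - x - y) * x ^ 0 * y ^ 2)
    [((-2437/2520 : ℝ), 0, 2), ((347/42 : ℝ), 0, 3), ((-284/21 : ℝ), 0, 4), ((47/36 : ℝ), 0, 5), ((17/3 : ℝ), 0, 6), ((6059/504 : ℝ), 1, 2), ((-4061/42 : ℝ), 1, 3), ((2053/12 : ℝ), 1, 4), ((-808/9 : ℝ), 1, 5), ((-5653/168 : ℝ), 2, 2), ((2173/12 : ℝ), 2, 3), ((-458/3 : ℝ), 2, 4), ((2627/72 : ℝ), 3, 2), ((-898/9 : ℝ), 3, 3), ((-247/18 : ℝ), 4, 2)]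
    (by intro x y
        simp only [bhat2, BAux.term, List.map_cons, List.map_nil, List.sum_cons, List.sum_nil]
        ring)
    (by norm_num [BAux.tval, Nat.factorial])

lemma momcase2_1_0 :
    ∫ q in unitTriangle, bhat2 q.1 q.2 (1 - q.1 - q.2) * q.1 ^ 1 * q.2 ^ 0 = 0 :=
  BAux.vanish (fun x y => bhat2 x y (1 - x - y) * x ^ 1 * y ^ 0)
    [((-2437/2520 : ℝ), 1, 0), ((347/42 : ℝ), 1, 1), ((-284/21 : ℝ), 1, 2), ((47/36 : ℝ), 1, 3), ((17/3 : ℝ), 1, 4), ((6059/504 : ℝ), 2, 0), ((-4061/42 : ℝ), 2, 1), ((2053/12 : ℝ), 2, 2), ((-808/9 : ℝ), 2, 3), ((-5653/168 : ℝ), 3, 0), ((2173/12 : ℝ), 3, 1), ((-458/3 : ℝ), 3, 2), ((2627/72 : ℝ), 4, 0), ((-898/9 : ℝ), 4, 1), ((-247/18 : ℝ), 5, 0)]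
    (by intro x y
        simp only [bhat2, BAux.term, List.map_cons, List.map_nil, List.sum_cons, List.sum_nil]
        ring)
    (by norm_num [BAux.tval, Nat.factorial])

lemma momcase2_1_1 :
    ∫ q in unitTriangle, bhat2 q.1 q.2 (1 - q.1 - q.2) * q.1 ^ 1 * q.2 ^ 1 = 0 :=
  BAux.vanish (fun x y => bhat2 x y (1 - x - y) * x ^ 1 * y ^ 1)
    [((-2437/2520 : ℝ), 1, 1), ((347/42 : ℝ), 1, 2), ((-284/21 : ℝ), 1, 3), ((47/36 : ℝ), 1, 4), ((17/3 : ℝ), 1, 5), ((6059/504 : ℝ), 2, 1), ((-4061/42 : ℝ), 2, 2), ((2053/12 : ℝ), 2, 3), ((-808/9 : ℝ), 2, 4), ((-5653/168 : ℝ), 3, 1), ((2173/12 : ℝ), 3, 2), ((-458/3 : ℝ), 3, 3), ((2627/72 : ℝ), 4, 1), ((-898/9 : ℝ), 4, 2), ((-247/18 : ℝ), 5, 1)]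
    (by intro x y
        simp only [bhat2, BAux.term, List.map_cons, List.map_nil, List.sum_cons, List.sum_nil]
        ring)
    (by norm_num [BAux.tval, Nat.factorial])

lemma momcase2_2_0 :
    ∫ q in unitTriangle, bhat2 q.1 q.2 (1 - q.1 - q.2) * q.1 ^ 2 * q.2 ^ 0 = 0 :=
  BAux.vanish (fun x y => bhat2 x y (1 - x - y) * x ^ 2 * y ^ 0)
    [((-2437/2520 : ℝ), 2, 0), ((347/42 : ℝ), 2, 1), ((-284/21 : ℝ), 2, 2), ((47/36 : ℝ), 2, 3), ((17/3 : ℝ), 2, 4), ((6059/504 : ℝ), 3, 0), ((-4061/42 : ℝ), 3, 1), ((2053/12 : ℝ), 3, 2), ((-808/9 : ℝ), 3, 3), ((-5653/168 : ℝ), 4, 0), ((2173/12 : ℝ), 4, 1), ((-458/3 : ℝ), 4, 2), ((2627/72 : ℝ), 5, 0), ((-898/9 : ℝ), 5, 1), ((-247/18 : ℝ), 6, 0)]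
    (by intro x y
        simp only [bhat2, BAux.term, List.map_cons, List.map_nil, List.sum_cons, List.sum_nil]
        ring)
    (by norm_num [BAux.tval, Nat.factorial])

lemma momcase3_0_0 :
    ∫ q in unitTriangle, bhat3 q.1 q.2 (1 - q.1 - q.2) * q.1 ^ 0 * q.2 ^ 0 = 0 :=
  BAux.vanish (fun x y => bhat3 x y (1 - x - y) * x ^ 0 * y ^ 0)
    [((-223/840 : ℝ), 0, 0), ((577/168 : ℝ), 0, 1), ((-951/56 : ℝ), 0, 2), ((209/8 : ℝ), 0, 3), ((-49/4 : ℝ), 0, 4), ((101/24 : ℝ), 1, 0), ((-101/7 : ℝ), 1, 1), ((33 : ℝ), 1, 2), ((-23 : ℝ), 1, 3), ((-1159/56 : ℝ), 2, 0), ((59 : ℝ), 2, 1), ((-105/2 : ℝ), 2, 2), ((235/8 : ℝ), 3, 0), ((-49 : ℝ), 3, 1), ((-49/4 : ℝ), 4, 0)]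
    (by intro x y
        simp only [bhat3, BAux.term, List.map_cons, List.map_nil, List.sum_cons, List.sum_nil]
        ring)
    (by norm_num [BAux.tval, Nat.factorial])

lemma momcase3_0_1 :
    ∫ q in unitTriangle, bhat3 q.1 q.2 (1 - q.1 - q.2) * q.1 ^ 0 * q.2 ^ 1 = 0 :=
  BAux.vanish (fun x y => bhat3 x y (1 - x - y) * x ^ 0 * y ^ 1)
    [((-223/840 : ℝ), 0, 1), ((577/168 : ℝ), 0, 2), ((-951/56 : ℝ), 0, 3), ((209/8 : ℝ), 0, 4), ((-49/4 : ℝ), 0, 5), ((101/24 : ℝ), 1, 1), ((-101/7 : ℝ), 1, 2), ((33 : ℝ), 1, 3), ((-23 : ℝ), 1, 4), ((-1159/56 : ℝ), 2, 1), ((59 : ℝ), 2, 2), ((-105/2 : ℝ), 2, 3), ((235/8 : ℝ), 3, 1), ((-49 : ℝ), 3, 2), ((-49/4 : ℝ), 4, 1)]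
    (by intro x y
        simp only [bhat3, BAux.term, List.map_cons, List.map_nil, List.sum_cons, List.sum_nil]
        ring)
    (by norm_num [BAux.tval, Nat.factorial])

lemma momcase3_0_2 :
    ∫ q in unitTriangle, bhat3 q.1 q.2 (1 - q.1 - q.2) * q.1 ^ 0 * q.2 ^ 2 = 0 :=
  BAux.vanish (fun x y => bhat3 x y (1 - x - y) * x ^ 0 * y ^ 2)
    [((-223/840 : ℝ), 0, 2), ((577/168 : ℝ), 0, 3), ((-951/56 : ℝ), 0, 4), ((209/8 : ℝ), 0, 5), ((-49/4 : ℝ), 0, 6), ((101/24 : ℝ), 1, 2), ((-101/7 : ℝ), 1, 3), ((33 : ℝ), 1, 4), ((-23 : ℝ), 1, 5), ((-1159/56 : ℝ), 2, 2), ((59 : ℝ), 2, 3), ((-105/2 : ℝ), 2, 4), ((235/8 : ℝ), 3, 2), ((-49 : ℝ), 3, 3), ((-49/4 : ℝ), 4, 2)]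
    (by intro x y
        simp only [bhat3, BAux.term, List.map_cons, List.map_nil, List.sum_cons, List.sum_nil]
        ring)
    (by norm_num [BAux.tval, Nat.factorial])

lemma momcase3_1_0 :
    ∫ q in unitTriangle, bhat3 q.1 q.2 (1 - q.1 - q.2) * q.1 ^ 1 * q.2 ^ 0 = 0 :=
  BAux.vanish (fun x y => bhat3 x y (1 - x - y) * x ^ 1 * y ^ 0)
    [((-223/840 : ℝ), 1, 0), ((577/168 : ℝ), 1, 1), ((-951/56 : ℝ), 1, 2), ((209/8 : ℝ), 1, 3), ((-49/4 : ℝ), 1, 4), ((101/24 : ℝ), 2, 0), ((-101/7 : ℝ), 2, 1), ((33 : ℝ), 2, 2), ((-23 : ℝ), 2, 3), ((-1159/56 : ℝ), 3, 0), ((59 : ℝ), 3, 1), ((-105/2 : ℝ), 3, 2), ((235/8 : ℝ), 4, 0), ((-49 : ℝ), 4, 1), ((-49/4 : ℝ), 5, 0)]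
    (by intro x y
        simp only [bhat3, BAux.term, List.map_cons, List.map_nil, List.sum_cons, List.sum_nil]
        ring)
    (by norm_num [BAux.tval, Nat.factorial])

lemma momcase3_1_1 :
    ∫ q in unitTriangle, bhat3 q.1 q.2 (1 - q.1 - q.2) * q.1 ^ 1 * q.2 ^ 1 = 0 :=
  BAux.vanish (fun x y => bhat3 x y (1 - x - y) * x ^ 1 * y ^ 1)
    [((-223/840 : ℝ), 1, 1), ((577/168 : ℝ), 1, 2), ((-951/56 : ℝ), 1, 3), ((209/8 : ℝ), 1, 4), ((-49/4 : ℝ), 1, 5), ((101/24 : ℝ), 2, 1), ((-101/7 : ℝ), 2, 2), ((33 : ℝ), 2, 3), ((-23 : ℝ), 2, 4), ((-1159/56 : ℝ), 3, 1), ((59 : ℝ), 3, 2), ((-105/2 : ℝ), 3, 3), ((235/8 : ℝ), 4, 1), ((-49 : ℝ), 4, 2), ((-49/4 : ℝ), 5, 1)]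
    (by intro x y
        simp only [bhat3, BAux.term, List.map_cons, List.map_nil, List.sum_cons, List.sum_nil]
        ring)
    (by norm_num [BAux.tval, Nat.factorial])

lemma momcase3_2_0 :
    ∫ q in unitTriangle, bhat3 q.1 q.2 (1 - q.1 - q.2) * q.1 ^ 2 * q.2 ^ 0 = 0 :=
  BAux.vanish (fun x y => bhat3 x y (1 - x - y) * x ^ 2 * y ^ 0)
    [((-223/840 : ℝ), 2, 0), ((577/168 : ℝ), 2, 1), ((-951/56 : ℝ), 2, 2), ((209/8 : ℝ), 2, 3), ((-49/4 : ℝ), 2, 4), ((101/24 : ℝ), 3, 0), ((-101/7 : ℝ), 3, 1), ((33 : ℝ), 3, 2), ((-23 : ℝ), 3, 3), ((-1159/56 : ℝ), 4, 0), ((59 : ℝ), 4, 1), ((-105/2 : ℝ), 4, 2), ((235/8 : ℝ), 5, 0), ((-49 : ℝ), 5, 1), ((-49/4 : ℝ), 6, 0)]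
    (by intro x y
        simp only [bhat3, BAux.term, List.map_cons, List.map_nil, List.sum_cons, List.sum_nil]
        ring)
    (by norm_num [BAux.tval, Nat.factorial])

/-- The reference bubble field `b̂` has vanishing `P₂` moments on the slanted face
`{x + y + z = 1}` of the reference tetrahedron: for every component `j` and all
exponents `a, b` with `a + b ≤ 2`, `∫ b̂ⱼ(x, y, 1 − x − y) xᵃ yᵇ` over the parameter
triangle `{x ≥ 0, y ≥ 0, x + y ≤ 1}` (two-dimensional Lebesgue measure) equals `0`. -/
theorem bhat_moments_slanted_face :
    ∀ j : Fin 3, ∀ a b : ℕ, a + b ≤ 2 →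
      ∫ q in unitTriangle, bhat j q.1 q.2 (1 - q.1 - q.2) * q.1 ^ a * q.2 ^ b = 0 := by
  intro j
  fin_cases j
  · show ∀ a b : ℕ, a + b ≤ 2 →
        ∫ q in unitTriangle, bhat1 q.1 q.2 (1 - q.1 - q.2) * q.1 ^ a * q.2 ^ b = 0
    intro a b hab
    have ha : a ≤ 2 := by omega
    have hb : b ≤ 2 := by omega
    interval_cases a <;> interval_cases b <;>
      first | exact momcase1_0_0 | exact momcase1_0_1 | exact momcase1_0_2 | exact momcase1_1_0 | exact momcase1_1_1 | exact momcase1_2_0 | (exfalso; omega)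
  · show ∀ a b : ℕ, a + b ≤ 2 →
        ∫ q in unitTriangle, bhat2 q.1 q.2 (1 - q.1 - q.2) * q.1 ^ a * q.2 ^ b = 0
    intro a b hab
    have ha : a ≤ 2 := by omega
    have hb : b ≤ 2 := by omega
    interval_cases a <;> interval_cases b <;>
      first | exact momcase2_0_0 | exact momcase2_0_1 | exact momcase2_0_2 | exact momcase2_1_0 | exact momcase2_1_1 | exact momcase2_2_0 | (exfalso; omega)
  · show ∀ a b : ℕ, a + b ≤ 2 →
        ∫ q in unitTriangle, bhat3 q.1 q.2 (1 - q.1 - q.2) * q.1 ^ a * q.2 ^ b = 0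
    intro a b hab
    have ha : a ≤ 2 := by omega
    have hb : b ≤ 2 := by omega
    interval_cases a <;> interval_cases b <;>
      first | exact momcase3_0_0 | exact momcase3_0_1 | exact momcase3_0_2 | exact momcase3_1_0 | exact momcase3_1_1 | exact momcase3_2_0 | (exfalso; omega)

end
end

section
/- Let b̂ : ℝ³ → ℝ³ be continuous, let F(x̂) = A x̂ + c be an invertible affine map of ℝ³ (A an invertible 3×3 real matrix), and let b(x) = A · b̂(F⁻¹(x)). Let F̂ ⊂ ℝ³ be a triangle (the convex hull of three points spanning a 2-dimensional affine plane). If for each component j ∈ {1, 2, 3} and every polynomial p of total degree at most 2 in three variables the surface integral ∫_{F̂} b̂ⱼ · p dσ = 0, then for each component j ∈ {1, 2, 3} and every polynomial q of total degree at most 2 in three variables the surface integral ∫_{F(F̂)} bⱼ · q dσ = 0, where the integrals are with respect to the two-dimensional Hausdorff (surface) measure on the respective triangles. -/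
open MeasureTheory MvPolynomial

noncomputable section

section Aux

/-- Evaluation of a multivariate polynomial is continuous. -/
lemma aux_continuous_eval (p : MvPolynomial (Fin 3) ℝ) :
    Continuous fun x : Fin 3 → ℝ => eval x p := by
  induction p using MvPolynomial.induction_on with
  | C a => simpa using (continuous_const : Continuous fun _ : Fin 3 → ℝ => a)
  | add p q hp hq => simp only [map_add]; exact hp.add hq
  | mul_X p i hp => simp only [map_mul, eval_X]; exact hp.mul (continuous_apply i)

/-- Substituting degree ≤ 1 polynomials does not increase the total degree. -/
lemma aux_totalDegree_bind₁ (f : Fin 3 → MvPolynomial (Fin 3) ℝ)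
    (hf : ∀ i, (f i).totalDegree ≤ 1) (q : MvPolynomial (Fin 3) ℝ) :
    (bind₁ f q).totalDegree ≤ q.totalDegree := by
  have h1 : bind₁ f q = ∑ d ∈ q.support, bind₁ f (monomial d (coeff d q)) := by
    conv_lhs => rw [q.as_sum]
    rw [map_sum]
  rw [h1]
  refine (totalDegree_finset_sum _ _).trans (Finset.sup_le fun d hd => ?_)
  rw [bind₁_monomial]
  refine (totalDegree_mul _ _).trans ?_
  rw [totalDegree_C, zero_add]
  refine (totalDegree_finset_prod _ _).trans ?_
  calc ∑ i ∈ d.support, ((f i) ^ (d i)).totalDegree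
      ≤ ∑ i ∈ d.support, d i := by
        refine Finset.sum_le_sum fun i _ => (totalDegree_pow _ _).trans ?_
        simpa using Nat.mul_le_mul_left (d i) (hf i)
    _ ≤ q.totalDegree := le_totalDegree hd

/-- Evaluation of a substituted polynomial. -/
lemma aux_eval_bind₁ (x : Fin 3 → ℝ) (f : Fin 3 → MvPolynomial (Fin 3) ℝ)
    (q : MvPolynomial (Fin 3) ℝ) :
    eval x (bind₁ f q) = eval (fun i => eval x (f i)) q :=
  eval₂Hom_bind₁ _ _ _ _

/-- Coordinates of the image of a vector under a linear map of `ℝ³`. -/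
lemma aux_coord (A : EuclideanSpace ℝ (Fin 3) →ₗ[ℝ] EuclideanSpace ℝ (Fin 3))
    (v : EuclideanSpace ℝ (Fin 3)) (j : Fin 3) :
    A v j = ∑ k, v k * A (EuclideanSpace.single k 1) j := by
  classical
  have hv : (∑ k, v k • EuclideanSpace.single k (1 : ℝ)) = v := by
    have h := (EuclideanSpace.basisFun (Fin 3) ℝ).sum_repr v
    simpa [EuclideanSpace.basisFun_apply, EuclideanSpace.basisFun_repr] using h
  set ℓ : EuclideanSpace ℝ (Fin 3) →ₗ[ℝ] ℝ :=
    ((EuclideanSpace.proj j : EuclideanSpace ℝ (Fin 3) →L[ℝ] ℝ) :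
      EuclideanSpace ℝ (Fin 3) →ₗ[ℝ] ℝ).comp A with hℓ
  have h1 : ∀ w, A w j = ℓ w := fun w => rfl
  rw [h1]
  conv_lhs => rw [← hv]
  rw [map_sum]
  refine Finset.sum_congr rfl fun k _ => ?_
  rw [LinearMap.map_smul, smul_eq_mul, ← h1]

/-- Transfer of a surface integral along an isometric parametrization. -/
lemma aux_setIntegral_isometry_image
    {φ : EuclideanSpace ℝ (Fin 2) → EuclideanSpace ℝ (Fin 3)} (hφ : Isometry φ)
    (A : Set (EuclideanSpace ℝ (Fin 2))) (g : EuclideanSpace ℝ (Fin 3) → ℝ) :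
    ∫ x in φ '' A, g x ∂ (μH[2] : Measure (EuclideanSpace ℝ (Fin 3)))
      = ∫ u in A, g (φ u) ∂ (μH[2] : Measure (EuclideanSpace ℝ (Fin 2))) := by
  have hmap : ((μH[2] : Measure (EuclideanSpace ℝ (Fin 3)))).restrict (φ '' A)
      = Measure.map φ (((μH[2] : Measure (EuclideanSpace ℝ (Fin 2)))).restrict A) := by
    ext B hB
    rw [Measure.map_apply hφ.continuous.measurable hB, Measure.restrict_apply hB,
      Measure.restrict_apply (hB.preimage hφ.continuous.measurable),
      ← Set.image_preimage_inter φ A B,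
      hφ.hausdorffMeasure_image (Or.inl (by norm_num : (0:ℝ) ≤ 2))]
  rw [hmap, (hφ.isClosedEmbedding.measurableEmbedding).integral_map]

end Aux

/-- **Mapped bubbles inherit vanishing `P₂` face moments.**
Let `b̂ : ℝ³ → ℝ³` be continuous, let `F(x̂) = A x̂ + c` be an invertible affine map of
`ℝ³` (an affine equivalence, i.e. `A = F.linear` is an invertible matrix), and let
`b(x) = A · b̂(F⁻¹(x))` be the Piola-type transform. Let `F̂` be the triangle with
vertices `p₀, p₁, p₂` spanning a 2-dimensional affine plane (i.e. affinely
independent), `F̂ = convexHull {p₀, p₁, p₂}`. If, for each component `j` and every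
polynomial `p` of total degree at most `2` in three variables,
`∫_{F̂} b̂ⱼ p dσ = 0` with respect to the two-dimensional Hausdorff (surface) measure,
then for each component `j` and every polynomial `q` of total degree at most `2`,
`∫_{F(F̂)} bⱼ q dσ = 0` with respect to the two-dimensional Hausdorff measure on the
image triangle. -/
theorem mapped_bubble_vanishing_P2_face_moments
    (bhat : EuclideanSpace ℝ (Fin 3) → EuclideanSpace ℝ (Fin 3))
    (hbhat : Continuous bhat)
    (F : EuclideanSpace ℝ (Fin 3) ≃ᵃ[ℝ] EuclideanSpace ℝ (Fin 3))
    (b : EuclideanSpace ℝ (Fin 3) → EuclideanSpace ℝ (Fin 3))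
    (hb : ∀ x, b x = F.linear (bhat (F.symm x)))
    (p₀ p₁ p₂ : EuclideanSpace ℝ (Fin 3))
    (hind : AffineIndependent ℝ ![p₀, p₁, p₂])
    (hmom : ∀ j : Fin 3, ∀ p : MvPolynomial (Fin 3) ℝ, p.totalDegree ≤ 2 →
      ∫ x in convexHull ℝ {p₀, p₁, p₂}, bhat x j * eval (fun i => x i) p ∂ μH[2] = 0) :
    ∀ j : Fin 3, ∀ q : MvPolynomial (Fin 3) ℝ, q.totalDegree ≤ 2 →
      ∫ x in ⇑F '' convexHull ℝ {p₀, p₁, p₂}, b x j * eval (fun i => x i) q ∂ μH[2] = 0 := by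
  intro j q hq
  classical
  set S : Set (EuclideanSpace ℝ (Fin 3)) := convexHull ℝ {p₀, p₁, p₂} with hSdef
  have hScomp : IsCompact S := (Set.toFinite {p₀, p₁, p₂}).isCompact_convexHull (𝕜 := ℝ)
  -- the direction plane of the triangle and its image
  set D := vectorSpan ℝ ({p₀, p₁, p₂} : Set (EuclideanSpace ℝ (Fin 3))) with hDdef
  have hrange : Set.range ![p₀, p₁, p₂] = ({p₀, p₁, p₂} : Set (EuclideanSpace ℝ (Fin 3))) := by
    ext x
    constructor
    · rintro ⟨i, rfl⟩
      fin_cases i <;> simp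
    · intro hx
      simp only [Set.mem_insert_iff, Set.mem_singleton_iff] at hx
      rcases hx with rfl | rfl | rfl
      · exact ⟨0, rfl⟩
      · exact ⟨1, rfl⟩
      · exact ⟨2, rfl⟩
  have hD2 : Module.finrank ℝ D = 2 := by
    have h := hind.finrank_vectorSpan (by simp : Fintype.card (Fin 3) = 2 + 1)
    rw [hrange] at h
    exact h
  set bD : OrthonormalBasis (Fin 2) ℝ D := (stdOrthonormalBasis ℝ D).reindex (finCongr hD2)
    with hbDdef
  set D' := D.map (F.linear : EuclideanSpace ℝ (Fin 3) →ₗ[ℝ] EuclideanSpace ℝ (Fin 3))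
    with hD'def
  have hD'2 : Module.finrank ℝ D' = 2 := by
    rw [hD'def, LinearEquiv.finrank_map_eq]
    exact hD2
  set bD' : OrthonormalBasis (Fin 2) ℝ D' := (stdOrthonormalBasis ℝ D').reindex (finCongr hD'2)
    with hbD'def
  set eD : D ≃ₗ[ℝ] D' := F.linear.submoduleMap D with heDdef
  -- the parametrizations
  set φ : EuclideanSpace ℝ (Fin 2) → EuclideanSpace ℝ (Fin 3) :=
    fun u => ↑(bD.repr.symm u) + p₀ with hφdef
  set ψ : EuclideanSpace ℝ (Fin 2) → EuclideanSpace ℝ (Fin 3) :=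
    fun u => ↑(bD'.repr.symm u) + F p₀ with hψdef
  set Le : EuclideanSpace ℝ (Fin 2) ≃ₗ[ℝ] EuclideanSpace ℝ (Fin 2) :=
    bD.repr.symm.toLinearEquiv ≪≫ₗ (eD ≪≫ₗ bD'.repr.toLinearEquiv) with hLedef
  set Lc : EuclideanSpace ℝ (Fin 2) →L[ℝ] EuclideanSpace ℝ (Fin 2) :=
    LinearMap.toContinuousLinearMap (Le : EuclideanSpace ℝ (Fin 2) →ₗ[ℝ] EuclideanSpace ℝ (Fin 2))
    with hLcdef
  have hLc : ⇑Lc = ⇑Le := by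
    rw [hLcdef]
    rw [LinearMap.coe_toContinuousLinearMap']
    rfl
  have hφiso : Isometry φ := Isometry.of_dist_eq fun u v => by
    simp only [hφdef]
    rw [dist_add_right, ← Subtype.dist_eq, bD.repr.symm.dist_map]
  have hψiso : Isometry ψ := Isometry.of_dist_eq fun u v => by
    simp only [hψdef]
    rw [dist_add_right, ← Subtype.dist_eq, bD'.repr.symm.dist_map]
  -- `S` lies in the range of `φ`
  have hSsub : S ⊆ Set.range φ := by
    intro x hx
    have hx' : x ∈ affineSpan ℝ ({p₀, p₁, p₂} : Set (EuclideanSpace ℝ (Fin 3))) :=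
      convexHull_subset_affineSpan _ hx
    have hp0 : p₀ ∈ affineSpan ℝ ({p₀, p₁, p₂} : Set (EuclideanSpace ℝ (Fin 3))) :=
      subset_affineSpan ℝ _ (by simp)
    have hd : x - p₀ ∈ D := by
      have h := AffineSubspace.vsub_mem_direction hx' hp0
      rw [direction_affineSpan] at h
      simpa [vsub_eq_sub] using h
    refine ⟨bD.repr ⟨x - p₀, hd⟩, ?_⟩
    simp [hφdef]
  set T : Set (EuclideanSpace ℝ (Fin 2)) := φ ⁻¹' S with hTdef
  have hTcomp : IsCompact T := by
    rw [Metric.isCompact_iff_isClosed_bounded]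
    exact ⟨hScomp.isClosed.preimage hφiso.continuous,
      hφiso.antilipschitz.isBounded_preimage hScomp.isBounded⟩
  have hφT : φ '' T = S := by
    rw [hTdef, Set.image_preimage_eq_inter_range]
    exact Set.inter_eq_self_of_subset_left hSsub
  -- the affine decomposition of `F`
  have hFlin : ∀ x, F x = F.linear x + F 0 := by
    intro x
    have h : F.toAffineMap.linear (x -ᵥ (0 : EuclideanSpace ℝ (Fin 3)))
        = F.toAffineMap x -ᵥ F.toAffineMap 0 := F.toAffineMap.linearMap_vsub x 0
    simp only [AffineEquiv.coe_toAffineMap, AffineEquiv.linear_toAffineMap,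
      LinearEquiv.coe_coe, vsub_eq_sub, sub_zero] at h
    rw [h]
    abel
  -- the commutation `F ∘ φ = ψ ∘ Lc`
  have hcomm : ∀ u, F (φ u) = ψ (Lc u) := by
    intro u
    rw [hLc]
    simp only [hφdef, hψdef]
    have h1 : bD'.repr.symm (Le u) = eD (bD.repr.symm u) := by
      simp [hLedef]
    rw [h1]
    have h2 : ((eD (bD.repr.symm u) : D') : EuclideanSpace ℝ (Fin 3))
        = F.linear ↑(bD.repr.symm u) := by
      rw [heDdef]
      exact F.linear.submoduleMap_apply D _
    rw [h2, hFlin (↑(bD.repr.symm u) + p₀), hFlin p₀, map_add]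
    abel
  -- Haar instance on the reference plane
  haveI hhaar : (μH[2] : Measure (EuclideanSpace ℝ (Fin 2))).IsAddHaarMeasure := by
    have h := MeasureTheory.isAddHaarMeasure_hausdorffMeasure
      (E := EuclideanSpace ℝ (Fin 2))
    rw [finrank_euclideanSpace_fin, (by norm_num : ((2:ℕ):ℝ) = 2)] at h
    exact h
  -- injectivity of `Lc`
  have hinj : Set.InjOn (⇑Lc) T := by
    apply Function.Injective.injOn
    rw [hLc]
    exact Le.injective
  -- change of variables in the plane
  have hJac : ∀ g : EuclideanSpace ℝ (Fin 2) → ℝ,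
      ∫ u in ⇑Lc '' T, g u ∂ μH[2] = ∫ u in T, |Lc.det| • g (Lc u) ∂ μH[2] := fun g =>
    integral_image_eq_integral_abs_det_fderiv_smul μH[2] hTcomp.measurableSet
      (fun x _ => Lc.hasFDerivWithinAt) hinj g
  -- image of the triangle
  have hFS : ⇑F '' S = ψ '' (⇑Lc '' T) := by
    rw [← hφT, ← Set.image_comp, ← Set.image_comp]
    exact Set.image_congr fun u _ => hcomm u
  -- the pulled-back polynomial
  set M : Fin 3 → Fin 3 → ℝ := fun i k => F.linear (EuclideanSpace.single k 1) i with hM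
  set Pol : Fin 3 → MvPolynomial (Fin 3) ℝ :=
    fun i => C ((F 0 : EuclideanSpace ℝ (Fin 3)) i) + ∑ k, C (M i k) * X k with hPol
  have hPoldeg : ∀ i, (Pol i).totalDegree ≤ 1 := by
    intro i
    rw [hPol]
    refine (totalDegree_add _ _).trans (max_le (by simp) ?_)
    refine totalDegree_finsetSum_le fun k _ => ?_
    refine (totalDegree_mul _ _).trans ?_
    simp [totalDegree_X]
  have hPoleval : ∀ x : EuclideanSpace ℝ (Fin 3), ∀ i,
      eval (fun l : Fin 3 => x l) (Pol i) = F x i := by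
    intro x i
    rw [hPol]
    simp only [map_add, eval_C, map_sum, eval_mul, eval_X]
    have hcoord := aux_coord
      (F.linear : EuclideanSpace ℝ (Fin 3) →ₗ[ℝ] EuclideanSpace ℝ (Fin 3)) x i
    simp only [LinearEquiv.coe_coe] at hcoord
    rw [hFlin x, PiLp.add_apply, hcoord]
    rw [add_comm]
    congr 1
    exact Finset.sum_congr rfl fun k _ => mul_comm _ _
  set phat : MvPolynomial (Fin 3) ℝ := bind₁ Pol q with hphat
  have hphatdeg : phat.totalDegree ≤ 2 := (aux_totalDegree_bind₁ Pol hPoldeg q).trans hq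
  have hphateval : ∀ x : EuclideanSpace ℝ (Fin 3),
      eval (fun i => F x i) q = eval (fun i => x i) phat := by
    intro x
    rw [hphat, aux_eval_bind₁]
    have hfuneq : (fun i => eval (fun l : Fin 3 => x l) (Pol i)) = fun i : Fin 3 => F x i :=
      funext fun i => hPoleval x i
    rw [hfuneq]
  -- pointwise transformation of the integrand
  have hgF : ∀ x : EuclideanSpace ℝ (Fin 3),
      b (F x) j * eval (fun i => F x i) q
        = ∑ k, M j k * (bhat x k * eval (fun i => x i) phat) := by
    intro x
    rw [hb, F.symm_apply_apply, hphateval]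
    have hcoord := aux_coord
      (F.linear : EuclideanSpace ℝ (Fin 3) →ₗ[ℝ] EuclideanSpace ℝ (Fin 3)) (bhat x) j
    simp only [LinearEquiv.coe_coe] at hcoord
    rw [hcoord]
    rw [Finset.sum_mul]
    exact Finset.sum_congr rfl fun k _ => by ring
  -- continuity of coordinates
  have hcoordcont : ∀ (k : Fin 3), Continuous fun x : EuclideanSpace ℝ (Fin 3) => x k :=
    fun k => (EuclideanSpace.proj k :
      EuclideanSpace ℝ (Fin 3) →L[ℝ] ℝ).continuous
  have hφcoords : Continuous fun u : EuclideanSpace ℝ (Fin 2) => (fun i : Fin 3 => φ u i) :=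
    continuous_pi fun i => (hcoordcont i).comp hφiso.continuous
  -- integrability of each summand
  have hint : ∀ k : Fin 3, IntegrableOn
      (fun u => M j k * (bhat (φ u) k * eval (fun i => (φ u) i) phat)) T μH[2] := by
    intro k
    have hc : Continuous fun u : EuclideanSpace ℝ (Fin 2) =>
        M j k * (bhat (φ u) k * eval (fun i => (φ u) i) phat) :=
      continuous_const.mul
        ((((hcoordcont k).comp hbhat).comp hφiso.continuous).mul
          ((aux_continuous_eval phat).comp hφcoords))
    exact hc.continuousOn.integrableOn_compact hTcomp
  -- the reference moments vanish
  have hzero : ∀ k : Fin 3,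
      ∫ u in T, bhat (φ u) k * eval (fun i => (φ u) i) phat ∂ μH[2] = 0 := by
    intro k
    have h := aux_setIntegral_isometry_image hφiso T
      (fun x => bhat x k * eval (fun i => x i) phat)
    rw [hφT] at h
    rw [← h]
    exact hmom k phat hphatdeg
  -- assemble
  calc ∫ x in ⇑F '' S, b x j * eval (fun i => x i) q ∂ μH[2]
      = ∫ u in ⇑Lc '' T, b (ψ u) j * eval (fun i => ψ u i) q ∂ μH[2] := by
        rw [hFS]
        exact aux_setIntegral_isometry_image hψiso _ _
    _ = ∫ u in T, |Lc.det| • (b (ψ (Lc u)) j * eval (fun i => ψ (Lc u) i) q) ∂ μH[2] := hJac _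
    _ = |Lc.det| * ∫ u in T, b (F (φ u)) j * eval (fun i => F (φ u) i) q ∂ μH[2] := by
        simp_rw [← hcomm]
        rw [integral_smul, smul_eq_mul]
    _ = |Lc.det| * ∑ k, M j k *
          ∫ u in T, bhat (φ u) k * eval (fun i => (φ u) i) phat ∂ μH[2] := by
        congr 1
        have heq : ∀ u, b (F (φ u)) j * eval (fun i => F (φ u) i) q
            = ∑ k, M j k * (bhat (φ u) k * eval (fun i => (φ u) i) phat) :=
          fun u => hgF (φ u)
        simp_rw [heq]
        rw [integral_finset_sum _ (fun k _ => hint k)]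
        exact Finset.sum_congr rfl fun k _ => integral_const_mul _ _
    _ = 0 := by
        simp [hzero]

end
end
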